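/- Let r, s ≥ 2 be integers. Assume that for every n and every hypergraph H on vertex set [n] one has χ(KG^r(H)) ≥ (n − alt_r(H)) / (r − 1) and χ(KG^s(H)) ≥ (n − alt_s(H)) / (s − 1). Then for every n and every hypergraph F on vertex set [n], χ(KG^{rs}(F)) ≥ (n − alt_{rs}(F)) / (rs − 1). -/

import Mathlib

open Finset

/-- A proper `t`-coloring of the Kneser hypergraph `KG^r(F)`: vertices are the members of `F`,
colors are taken in `{1,...,t}`, and no set of `r` pairwise disjoint members of `F`
(an edge) is monochromatic. -/
def IsKneserColoring (n r t : ℕ) (F : Finset (Finset (Fin n)))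
    (c : Finset (Fin n) → ℕ) : Prop :=
  (∀ A ∈ F, c A ∈ Finset.Icc 1 t) ∧
    ∀ E : Finset (Finset (Fin n)), E ⊆ F → E.card = r →
      ((E : Set (Finset (Fin n))).Pairwise fun A B => Disjoint A B) →
      ¬ ∃ i, ∀ A ∈ E, c A = i

/-- The chromatic number of the Kneser hypergraph `KG^r(F)`. -/
noncomputable def kneserChrom (n r : ℕ) (F : Finset (Finset (Fin n))) : ℕ :=
  sInf {t | ∃ c, IsKneserColoring n r t F c}

/-- `l` is (the index list of) an alternating subsequence of
`(X (σ 1), ..., X (σ n))`: indices are increasing, all chosen entries are nonzero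
(`≠ none`), and any two consecutive chosen entries differ. -/
def IsAltList {α : Type*} (n : ℕ) (σ : Equiv.Perm (Fin n))
    (X : Fin n → Option α) (l : List (Fin n)) : Prop :=
  l.Chain' (· < ·) ∧ (∀ i ∈ l, X (σ i) ≠ none) ∧
    l.Chain' (fun i j => X (σ i) ≠ X (σ j))

/-- `alt_σ(X)`: maximum length of an alternating subsequence of nonzero entries of
`(X (σ 1), ..., X (σ n))`. -/
noncomputable def altVec {α : Type*} (n : ℕ) (σ : Equiv.Perm (Fin n))
    (X : Fin n → Option α) : ℕ :=
  sSup {k | ∃ l : List (Fin n), IsAltList n σ X l ∧ l.length = k}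

/-- `alt_{r,σ}(F)`: the largest `ℓ` such that some nonzero `X ∈ (Z_r ∪ {0})^n` has
`alt_σ(X) = ℓ` and no `X^j` contains a member of `F`. -/
noncomputable def altHyp (n r : ℕ) (σ : Equiv.Perm (Fin n))
    (F : Finset (Finset (Fin n))) : ℕ :=
  sSup {k | ∃ X : Fin n → Option (Fin r), (∃ a, X a ≠ none) ∧
    altVec n σ X = k ∧ ∀ j : Fin r, ∀ A ∈ F, ¬ ∀ a ∈ A, X a = some j}

/-- `alt_r(F) = min_σ alt_{r,σ}(F)`. -/
noncomputable def altNum (n r : ℕ) (F : Finset (Finset (Fin n))) : ℕ :=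
  sInf {k | ∃ σ : Equiv.Perm (Fin n), altHyp n r σ F = k}

/-!
Let `t = χ(KG^{rs}(F))`, realised by a colouring `c`, and let `H` consist of the sets containing
`s` pairwise disjoint members of `F` of one colour. Colouring a member of `H` by the colour of
such a packing is proper for `KG^r(H)`, so `n - alt_r(H) ≤ (r - 1) t`.

Fix `σ` with `alt_{rs,σ}(F) = alt_{rs}(F)` and an `r`-vector `X` avoiding `H`. No class `X^j`
contains a monochromatic `s`-packing, so `c` properly colours `KG^s` of the members of `F` inside
`X^j`, whose `s`-alternation number is therefore at least `n - (s - 1) t`. Reading `X^j` first,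
this yields an `s`-vector `Y_j` avoiding those members with an alternating sequence of length at
least `|X^j| - (s - 1) t` inside `X^j`. The pairs `(j, Y_j)` form an `rs`-vector avoiding `F`
whose alternation is at least the sum of these, so `alt_r(H) ≤ alt_{rs}(F) + r (s - 1) t`, and
`n - alt_{rs}(F) ≤ (r - 1) t + r (s - 1) t = (rs - 1) t`.
-/

theorem isChain_iff_of_pairwise_lt {α : Type*} [LinearOrder α] {l : List α}
    (hl : l.Pairwise (· < ·)) {R : α → α → Prop} :
    l.IsChain R ↔ ∀ a ∈ l, ∀ b ∈ l, a < b → (∀ x ∈ l, ¬(a < x ∧ x < b)) → R a b := by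
  induction l with
  | nil => simp
  | cons c t ih =>
    cases t with
    | nil => simp
    | cons d t =>
      rw [List.isChain_cons_cons, ih hl.of_cons]
      have hc : ∀ x ∈ d :: t, c < x := fun x hx => List.rel_of_pairwise_cons hl hx
      have hd : ∀ x ∈ t, d < x := fun x hx => List.rel_of_pairwise_cons hl.of_cons hx
      grind

variable {n : ℕ}

section Alternation

variable {α β : Type*}

theorem IsAltList.pairwise_lt {σ : Equiv.Perm (Fin n)} {X : Fin n → Option α} {l : List (Fin n)}
    (hl : IsAltList n σ X l) : l.Pairwise (· < ·) :=
  List.isChain_iff_pairwise.mp hl.1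

theorem IsAltList.nodup {σ : Equiv.Perm (Fin n)} {X : Fin n → Option α} {l : List (Fin n)}
    (hl : IsAltList n σ X l) : l.Nodup :=
  hl.pairwise_lt.imp ne_of_lt

theorem IsAltList.length_le {σ : Equiv.Perm (Fin n)} {X : Fin n → Option α} {l : List (Fin n)}
    (hl : IsAltList n σ X l) : l.length ≤ n := by
  simpa using hl.nodup.length_le_card

theorem bddAbove_altLengths (σ : Equiv.Perm (Fin n)) (X : Fin n → Option α) :
    BddAbove {k | ∃ l : List (Fin n), IsAltList n σ X l ∧ l.length = k} :=
  ⟨n, by rintro _ ⟨l, hl, rfl⟩; exact hl.length_le⟩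

theorem IsAltList.length_le_altVec {σ : Equiv.Perm (Fin n)} {X : Fin n → Option α}
    {l : List (Fin n)} (hl : IsAltList n σ X l) : l.length ≤ altVec n σ X :=
  le_csSup (bddAbove_altLengths σ X) ⟨l, hl, rfl⟩

theorem exists_isAltList_length_eq_altVec (σ : Equiv.Perm (Fin n)) (X : Fin n → Option α) :
    ∃ l : List (Fin n), IsAltList n σ X l ∧ l.length = altVec n σ X :=
  Nat.sSup_mem (s := {k | ∃ l : List (Fin n), IsAltList n σ X l ∧ l.length = k})
    ⟨0, [], ⟨List.isChain_nil, by simp, List.isChain_nil⟩, rfl⟩ (bddAbove_altLengths σ X)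

theorem altVec_le (σ : Equiv.Perm (Fin n)) (X : Fin n → Option α) : altVec n σ X ≤ n := by
  obtain ⟨l, hl, hlen⟩ := exists_isAltList_length_eq_altVec σ X
  exact hlen ▸ hl.length_le

theorem IsAltList.of_map_eq {σ : Equiv.Perm (Fin n)} {X : Fin n → Option α}
    {W : Fin n → Option β} {g : α → β} (hg : g.Injective) {l : List (Fin n)}
    (hl : IsAltList n σ X l) (hW : ∀ a ∈ l, W (σ a) = (X (σ a)).map g) : IsAltList n σ W l := by
  refine ⟨hl.1, fun a ha => by simpa [hW a ha] using hl.2.1 a ha, ?_⟩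
  refine hl.2.2.imp_of_mem_imp fun a b ha hb hab => ?_
  rw [hW a ha, hW b hb]
  exact fun h => hab (Option.map_injective hg h)

theorem IsAltList.length_le_sum_card {σ : Equiv.Perm (Fin n)} {r : ℕ}
    {X : Fin n → Option (Fin r)} {l : List (Fin n)}
    (hl : IsAltList n σ X l) : l.length ≤ ∑ j, #{i | X (σ i) = some j} := by
  have hsub : l.toFinset ⊆ univ.biUnion fun j => {i | X (σ i) = some j} := by
    intro a ha
    obtain ⟨j, hj⟩ := Option.ne_none_iff_exists'.mp (hl.2.1 a (List.mem_toFinset.mp ha))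
    simp only [mem_biUnion, mem_univ, mem_filter, true_and]
    exact ⟨j, hj⟩
  calc l.length = #l.toFinset := (List.toFinset_card_of_nodup hl.nodup).symm
    _ ≤ _ := card_le_card hsub
    _ ≤ _ := card_biUnion_le

end Alternation

def Avoids {r : ℕ} (F : Finset (Finset (Fin n))) (X : Fin n → Option (Fin r)) : Prop :=
  ∀ j : Fin r, ∀ A ∈ F, ¬ ∀ a ∈ A, X a = some j

theorem bddAbove_altHypValues (r : ℕ) (σ : Equiv.Perm (Fin n)) (F : Finset (Finset (Fin n))) :
    BddAbove {k | ∃ X : Fin n → Option (Fin r), (∃ a, X a ≠ none) ∧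
      altVec n σ X = k ∧ Avoids F X} :=
  ⟨n, by rintro _ ⟨X, -, rfl, -⟩; exact altVec_le σ X⟩

theorem altVec_le_altHyp {r : ℕ} {σ : Equiv.Perm (Fin n)} {F : Finset (Finset (Fin n))}
    {X : Fin n → Option (Fin r)} (hX : Avoids F X) :
    altVec n σ X ≤ altHyp n r σ F := by
  obtain ⟨l, hl, hlen⟩ := exists_isAltList_length_eq_altVec σ X
  cases l with
  | nil => simp [← hlen]
  | cons a l =>
    exact le_csSup (bddAbove_altHypValues r σ F) ⟨X, ⟨σ a, hl.2.1 a (by simp)⟩, rfl, hX⟩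

theorem exists_avoids_altHyp_le_altVec {F : Finset (Finset (Fin n))}
    (hF : ∀ A ∈ F, A.Nonempty) (r : ℕ) (σ : Equiv.Perm (Fin n)) :
    ∃ X : Fin n → Option (Fin r), Avoids F X ∧ altHyp n r σ F ≤ altVec n σ X := by
  by_cases h : altHyp n r σ F = 0
  · refine ⟨fun _ => none, fun j A hA hall => ?_, by simp [h]⟩
    obtain ⟨a, ha⟩ := hF A hA
    exact absurd (hall a ha) (by simp)
  · have hne := Set.nonempty_iff_ne_empty.2 fun he => h ((congrArg sSup he).trans csSup_empty)
    obtain ⟨X, -, hX, hav⟩ := Nat.sSup_mem hne (bddAbove_altHypValues r σ F)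
    exact ⟨X, hav, hX.ge⟩

theorem altNum_le_altHyp (r : ℕ) (σ : Equiv.Perm (Fin n)) (F : Finset (Finset (Fin n))) :
    altNum n r F ≤ altHyp n r σ F :=
  Nat.sInf_le ⟨σ, rfl⟩

theorem exists_altHyp_eq_altNum (r : ℕ) (F : Finset (Finset (Fin n))) :
    ∃ σ : Equiv.Perm (Fin n), altHyp n r σ F = altNum n r F :=
  Nat.sInf_mem (s := {k | ∃ σ : Equiv.Perm (Fin n), altHyp n r σ F = k}) ⟨_, 1, rfl⟩

theorem kneserChrom_le {r t : ℕ} {F : Finset (Finset (Fin n))} {c : Finset (Fin n) → ℕ}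
    (hc : IsKneserColoring n r t F c) : kneserChrom n r F ≤ t :=
  Nat.sInf_le ⟨c, hc⟩

theorem exists_isKneserColoring_kneserChrom {r : ℕ} (hr : 1 < r) (F : Finset (Finset (Fin n))) :
    ∃ c, IsKneserColoring n r (kneserChrom n r F) F c := by
  classical
  refine Nat.sInf_mem (s := {t | ∃ c, IsKneserColoring n r t F c})
    ⟨#F, fun A => if hA : A ∈ F then F.equivFin ⟨A, hA⟩ + 1 else 1, ?_, ?_⟩
  · intro A hA
    simp [hA, Nat.succ_le_of_lt (F.equivFin ⟨A, hA⟩).isLt]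
  · rintro E hEF hcard - ⟨i, hi⟩
    obtain ⟨A, hA, B, hB, hAB⟩ := one_lt_card.mp (hcard ▸ hr)
    have h := (hi A hA).trans (hi B hB).symm
    simp only [dif_pos (hEF hA), dif_pos (hEF hB), add_left_inj, Fin.val_inj,
      EmbeddingLike.apply_eq_iff_eq, Subtype.mk.injEq] at h
    exact hAB h

/-- Alternating lists living in distinct classes of a colouring `f` of the values of `W` can be
merged: where two neighbours of the merged list come from the same list, they are neighbours
there too. -/
theorem sum_length_le_altVec {β ι : Type*} [Fintype ι] {σ : Equiv.Perm (Fin n)}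
    {W : Fin n → Option β} (f : β → ι) (l : ι → List (Fin n))
    (hl : ∀ j, IsAltList n σ W (l j)) (hf : ∀ j, ∀ a ∈ l j, (W (σ a)).map f = some j) :
    ∑ j, (l j).length ≤ altVec n σ W := by
  classical
  set S : Finset (Fin n) := univ.biUnion fun j => (l j).toFinset
  have hS : ∀ a, a ∈ S ↔ ∃ j, a ∈ l j := by simp [S]
  have hcard : #S = ∑ j, (l j).length := by
    rw [card_biUnion]
    · exact sum_congr rfl fun j _ => List.toFinset_card_of_nodup (hl j).nodup
    · intro j _ j' _ hjj'
      refine disjoint_left.mpr fun a ha ha' => hjj' ?_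
      have := (hf j a (List.mem_toFinset.mp ha)).symm.trans (hf j' a (List.mem_toFinset.mp ha'))
      exact Option.some_injective _ this
  have hsorted : (S.sort (· ≤ ·)).Pairwise (· < ·) :=
    List.isChain_iff_pairwise.mp S.sortedLT_sort.isChain
  have halt : IsAltList n σ W (S.sort (· ≤ ·)) := by
    refine ⟨S.sortedLT_sort.isChain, fun a ha => ?_, ?_⟩
    · obtain ⟨j, hj⟩ := (hS a).mp ((mem_sort _).mp ha)
      exact (hl j).2.1 a hj
    · refine (isChain_iff_of_pairwise_lt hsorted).mpr fun a ha b hb hab hgap heq => ?_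
      obtain ⟨j, hj⟩ := (hS a).mp ((mem_sort _).mp ha)
      obtain ⟨j', hj'⟩ := (hS b).mp ((mem_sort _).mp hb)
      obtain rfl : j = j' := Option.some_injective _ <| by
        rw [← hf j a hj, ← hf j' b hj', heq]
      refine (isChain_iff_of_pairwise_lt (hl j).pairwise_lt).mp (hl j).2.2 a hj b hj' hab
        (fun x hx => hgap x ((mem_sort _).mpr ((hS x).mpr ⟨j, hx⟩))) heq
  calc ∑ j, (l j).length = (S.sort (· ≤ ·)).length := by rw [length_sort, hcard]
    _ ≤ altVec n σ W := halt.length_le_altVec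

theorem exists_perm_mem_of_lt_card (D : Finset (Fin n)) :
    ∃ τ : Equiv.Perm (Fin n), (∀ i : Fin n, (i : ℕ) < #D → τ i ∈ D) ∧
      StrictMonoOn τ {i | (i : ℕ) < #D} := by
  classical
  let e : {i : Fin n // (i : ℕ) < #D} ≃o {x // x ∈ D} :=
    (Fin.castLEOrderIso (card_le_univ D |>.trans_eq (Fintype.card_fin n))).symm.trans
      (D.orderIsoOfFin rfl)
  refine ⟨Equiv.extendSubtype e.toEquiv, fun i hi => ?_, fun i hi i' hi' hii' => ?_⟩
  · rw [Equiv.extendSubtype_apply_of_mem e.toEquiv i hi]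
    exact (e ⟨i, hi⟩).2
  · rw [Equiv.extendSubtype_apply_of_mem e.toEquiv i hi,
      Equiv.extendSubtype_apply_of_mem e.toEquiv i' hi']
    exact e.strictMono (show (⟨i, hi⟩ : {i : Fin n // (i : ℕ) < #D}) < ⟨i', hi'⟩ from hii')

theorem card_filter_not_val_lt (m : ℕ) : #{i : Fin n | ¬ (i : ℕ) < m} = n - m := by
  rw [filter_not, card_sdiff_of_subset (filter_subset _ _), Fin.card_filter_val_lt, card_univ,
    Fintype.card_fin]
  omega

theorem IsAltList.exists_restrict {α : Type*} {σ τ : Equiv.Perm (Fin n)} {Y : Fin n → Option α}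
    {D : Finset (Fin n)} (hτD : ∀ i : Fin n, (i : ℕ) < #D → τ i ∈ D)
    (hτ : StrictMonoOn τ {i | (i : ℕ) < #D}) {l : List (Fin n)}
    (hl : IsAltList n (τ.trans σ) Y l) :
    ∃ l' : List (Fin n), IsAltList n σ Y l' ∧ (∀ a ∈ l', a ∈ D) ∧
      l.length ≤ l'.length + (n - #D) := by
  set p : Fin n → Bool := fun i => decide ((i : ℕ) < #D)
  have hp : ∀ i ∈ l.filter p, (i : ℕ) < #D := fun i hi => by
    simpa [p] using (List.mem_filter.mp hi).2
  have hsorted : (l.filter p).Pairwise (· < ·) := hl.pairwise_lt.filter p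
  have hrest : (l.filter (fun i => !p i)).length ≤ n - #D := by
    rw [← List.toFinset_card_of_nodup (hl.nodup.filter _), ← card_filter_not_val_lt]
    refine card_le_card fun i hi => ?_
    simpa [p] using (List.mem_filter.mp (List.mem_toFinset.mp hi)).2
  refine ⟨(l.filter p).map τ, ⟨?_, ?_, ?_⟩, ?_, ?_⟩
  · refine List.isChain_map _ |>.mpr (List.Pairwise.isChain ?_)
    exact hsorted.imp_of_mem fun ha hb hab => hτ (hp _ ha) (hp _ hb) hab
  · simp only [List.mem_map]
    rintro _ ⟨i, hi, rfl⟩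
    exact hl.2.1 i (List.mem_of_mem_filter hi)
  · -- an entry of `l` lying between two entries of `l.filter p` is itself in `l.filter p`
    refine List.isChain_map _ |>.mpr <| (isChain_iff_of_pairwise_lt hsorted).mpr
      fun a ha b hb hab hgap => ?_
    refine (isChain_iff_of_pairwise_lt hl.pairwise_lt).mp hl.2.2 a (List.mem_of_mem_filter ha) b
      (List.mem_of_mem_filter hb) hab fun x hx hxab => hgap x ?_ hxab
    have : (x : ℕ) < #D := (Fin.lt_def.mp hxab.2).trans (hp b hb)
    simpa [p, this] using hx
  · simp only [List.mem_map]
    rintro _ ⟨i, hi, rfl⟩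
    exact hτD i (hp i hi)
  · rw [List.length_map]
    have := List.length_eq_length_filter_add (l := l) p
    omega

/-- `τ.trans σ` reads the positions in `D` first, in `σ`-order, so an alternating list for it
loses at most `n - #D` entries when cut down to `D`. -/
theorem exists_avoids_isAltList_subset {s : ℕ} {G : Finset (Finset (Fin n))}
    (hG : ∀ A ∈ G, A.Nonempty) (σ : Equiv.Perm (Fin n)) (D : Finset (Fin n)) :
    ∃ Y : Fin n → Option (Fin s), Avoids G Y ∧ ∃ l : List (Fin n), IsAltList n σ Y l ∧
      (∀ a ∈ l, a ∈ D) ∧ altNum n s G ≤ l.length + (n - #D) := by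
  obtain ⟨τ, hτD, hτ⟩ := exists_perm_mem_of_lt_card D
  obtain ⟨Y, hY, hYalt⟩ := exists_avoids_altHyp_le_altVec hG s (τ.trans σ)
  obtain ⟨l₀, hl₀, hlen⟩ := exists_isAltList_length_eq_altVec (τ.trans σ) Y
  obtain ⟨l, hl, hlD, hll⟩ := hl₀.exists_restrict hτD hτ
  exact ⟨Y, hY, l, hl, hlD, (altNum_le_altHyp s _ G).trans (hYalt.trans (hlen ▸ hll))⟩

section ProductVector

variable {r s : ℕ}

/-- The vector with entry `(j, k) ∈ Z_r × Z_s ≅ Z_{rs}` where `X` is `j` and `Y j` is `k`. -/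
def prodVec (X : Fin n → Option (Fin r)) (Y : Fin r → Fin n → Option (Fin s)) :
    Fin n → Option (Fin (r * s)) :=
  fun a => (X a).bind fun j => (Y j a).map fun k => finProdFinEquiv (j, k)

/-- The class `X^j` of the vector `X`. -/
def vecClass (X : Fin n → Option (Fin r)) (j : Fin r) : Finset (Fin n) :=
  {a | X a = some j}

variable {X : Fin n → Option (Fin r)} {Y : Fin r → Fin n → Option (Fin s)}

theorem prodVec_eq_some {a : Fin n} {j : Fin r} {k : Fin s} :
    prodVec X Y a = some (finProdFinEquiv (j, k)) ↔ X a = some j ∧ Y j a = some k := by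
  simp [prodVec, Option.bind_eq_some_iff]

theorem avoids_prodVec {F : Finset (Finset (Fin n))}
    (hY : ∀ j, Avoids {A ∈ F | A ⊆ vecClass X j} (Y j)) : Avoids F (prodVec X Y) := by
  intro u A hA hall
  obtain ⟨⟨j, k⟩, rfl⟩ := finProdFinEquiv.surjective u
  have h : ∀ a ∈ A, X a = some j ∧ Y j a = some k := fun a ha => prodVec_eq_some.mp (hall a ha)
  refine hY j k A (mem_filter.mpr ⟨hA, fun a ha => ?_⟩) fun a ha => (h a ha).2
  simpa [vecClass] using (h a ha).1

theorem sum_length_le_altVec_prodVec {σ : Equiv.Perm (Fin n)} (l : Fin r → List (Fin n))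
    (hl : ∀ j, IsAltList n σ (Y j) (l j)) (hX : ∀ j, ∀ a ∈ l j, X (σ a) = some j) :
    ∑ j, (l j).length ≤ altVec n σ (prodVec X Y) := by
  refine sum_length_le_altVec (fun u => (finProdFinEquiv.symm u).1) l (fun j => ?_) ?_
  · refine (hl j).of_map_eq (g := fun k => finProdFinEquiv (j, k)) ?_ fun a ha => ?_
    · exact fun k k' h => by simpa using finProdFinEquiv.injective h
    · rcases hY : Y j (σ a) with _ | k <;> simp [prodVec, hX j a ha, hY]
  · intro j a ha
    obtain ⟨k, hk⟩ := Option.ne_none_iff_exists'.mp ((hl j).2.1 a ha)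
    simp only [prodVec, hX j a ha, hk, Option.bind_some, Option.map_some,
      Equiv.symm_apply_apply]

end ProductVector

/-- The `s`-vectors realising `hFH` on the classes of an `r`-vector avoiding `H` glue to an
`rs`-vector avoiding `F`. -/
theorem altHyp_le_altHyp_mul_add {r s m : ℕ} {F H : Finset (Finset (Fin n))}
    (σ : Equiv.Perm (Fin n)) (hF : ∀ A ∈ F, A.Nonempty) (hH : ∀ A ∈ H, A.Nonempty)
    (hFH : ∀ V ∉ H, n ≤ m + altNum n s {A ∈ F | A ⊆ V}) :
    altHyp n r σ H ≤ altHyp n (r * s) σ F + r * m := by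
  obtain ⟨X, hXH, hX⟩ := exists_avoids_altHyp_le_altVec hH r σ
  obtain ⟨lX, hlX, hlen⟩ := exists_isAltList_length_eq_altVec σ X
  have hblock : ∀ j : Fin r, ∃ Y : Fin n → Option (Fin s),
      Avoids {A ∈ F | A ⊆ vecClass X j} Y ∧ ∃ l : List (Fin n), IsAltList n σ Y l ∧
        (∀ a ∈ l, X (σ a) = some j) ∧ #{i | X (σ i) = some j} ≤ m + l.length := by
    intro j
    have hV : vecClass X j ∉ H := fun hVH => hXH j _ hVH fun a ha => by simpa [vecClass] using ha
    set D : Finset (Fin n) := {i | X (σ i) = some j}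
    obtain ⟨Y, hY, l, hl, hlD, hlen⟩ := exists_avoids_isAltList_subset (s := s)
      (G := {A ∈ F | A ⊆ vecClass X j}) (fun A hA => hF A (mem_filter.mp hA).1) σ D
    refine ⟨Y, hY, l, hl, fun a ha => (mem_filter.mp (hlD a ha)).2, ?_⟩
    have := hFH _ hV
    have := (card_le_univ D).trans_eq (Fintype.card_fin n)
    omega
  choose Y hY l hl hlmem hcard using hblock
  calc altHyp n r σ H ≤ lX.length := hlen ▸ hX
    _ ≤ ∑ j, #{i | X (σ i) = some j} := hlX.length_le_sum_card
    _ ≤ ∑ j, (m + (l j).length) := sum_le_sum fun j _ => hcard j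
    _ = r * m + ∑ j, (l j).length := by simp [sum_add_distrib]
    _ ≤ r * m + altHyp n (r * s) σ F := by
      gcongr
      exact (sum_length_le_altVec_prodVec l hl hlmem).trans
        (altVec_le_altHyp (avoids_prodVec hY))
    _ = altHyp n (r * s) σ F + r * m := add_comm _ _

noncomputable def monoPackingHull (F : Finset (Finset (Fin n))) (c : Finset (Fin n) → ℕ)
    (s : ℕ) : Finset (Finset (Fin n)) := by
  classical
  exact {A | ∃ i, ∃ E ⊆ F, #E = s ∧ (E : Set (Finset (Fin n))).Pairwise Disjoint ∧
    (∀ B ∈ E, B ⊆ A) ∧ ∀ B ∈ E, c B = i}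

section MonochromaticPackings

variable {r s t : ℕ} {F : Finset (Finset (Fin n))} {c : Finset (Fin n) → ℕ}

theorem mem_monoPackingHull {A : Finset (Fin n)} :
    A ∈ monoPackingHull F c s ↔ ∃ i, ∃ E ⊆ F, #E = s ∧
      (E : Set (Finset (Fin n))).Pairwise Disjoint ∧ (∀ B ∈ E, B ⊆ A) ∧ ∀ B ∈ E, c B = i := by
  simp [monoPackingHull]

theorem nonempty_of_mem_monoPackingHull (hF : ∀ A ∈ F, A.Nonempty) (hs : s ≠ 0)
    {A : Finset (Fin n)} (hA : A ∈ monoPackingHull F c s) : A.Nonempty := by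
  obtain ⟨-, E, hEF, hcard, -, hEA, -⟩ := mem_monoPackingHull.mp hA
  obtain ⟨B, hB⟩ := card_ne_zero.mp (hcard ▸ hs)
  exact (hF B (hEF hB)).mono (hEA B hB)

/-- Colouring a member of the hull by the colour of a packing inside it is proper for
`KG^r`: `r` disjoint members carry `rs` disjoint members of `F` of one colour. -/
theorem exists_isKneserColoring_monoPackingHull (hc : IsKneserColoring n (r * s) t F c)
    (hF : ∀ A ∈ F, A.Nonempty) (hs : s ≠ 0) :
    ∃ c', IsKneserColoring n r t (monoPackingHull F c s) c' := by
  have h : ∀ A ∈ monoPackingHull F c s, ∃ i, ∃ E ⊆ F, #E = s ∧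
      (E : Set (Finset (Fin n))).Pairwise Disjoint ∧ (∀ B ∈ E, B ⊆ A) ∧ ∀ B ∈ E, c B = i :=
    fun A hA => mem_monoPackingHull.mp hA
  choose! col pack hpackF hcard hdisj hsub hcol using h
  refine ⟨col, fun A hA => ?_, ?_⟩
  · obtain ⟨B, hB⟩ := card_ne_zero.mp ((hcard A hA).symm ▸ hs)
    exact hcol A hA B hB ▸ hc.1 B (hpackF A hA hB)
  · rintro E hE hEcard hEdisj ⟨i, hi⟩
    have hpack_disj :
        ∀ A ∈ E, ∀ A' ∈ E, A ≠ A' → ∀ B ∈ pack A, ∀ B' ∈ pack A', Disjoint B B' :=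
      fun A hA A' hA' hAA' B hB B' hB' =>
        (hEdisj hA hA' hAA').mono (hsub A (hE hA) B hB) (hsub A' (hE hA') B' hB')
    refine hc.2 (E.biUnion pack) (fun B hB => ?_) ?_ ?_ ⟨i, fun B hB => ?_⟩
    · obtain ⟨A, hA, hB⟩ := mem_biUnion.mp hB
      exact hpackF A (hE hA) hB
    · rw [card_biUnion, sum_congr rfl fun A hA => hcard A (hE hA), sum_const, hEcard, smul_eq_mul]
      intro A hA A' hA' hAA'
      refine disjoint_left.mpr fun B hB hB' => ?_
      obtain ⟨b, hb⟩ := hF B (hpackF A (hE hA) hB)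
      exact disjoint_left.mp (hpack_disj A hA A' hA' hAA' B hB B hB') hb hb
    · intro B hB B' hB' hBB'
      obtain ⟨A, hA, hB⟩ := mem_biUnion.mp hB
      obtain ⟨A', hA', hB'⟩ := mem_biUnion.mp hB'
      obtain rfl | hAA' := eq_or_ne A A'
      · exact hdisj A (hE hA) hB hB' hBB'
      · exact hpack_disj A hA A' hA' hAA' B hB B' hB'
    · obtain ⟨A, hA, hB⟩ := mem_biUnion.mp hB
      exact (hcol A (hE hA) B hB).trans (hi A hA)

theorem isKneserColoring_filter_subset (hc : ∀ A ∈ F, c A ∈ Icc 1 t) {V : Finset (Fin n)}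
    (hV : V ∉ monoPackingHull F c s) : IsKneserColoring n s t {A ∈ F | A ⊆ V} c := by
  refine ⟨fun A hA => hc A (mem_filter.mp hA).1, ?_⟩
  rintro E hE hcard hdisj ⟨i, hi⟩
  exact hV (mem_monoPackingHull.mpr ⟨i, E, fun B hB => (mem_filter.mp (hE hB)).1, hcard, hdisj,
    fun B hB => (mem_filter.mp (hE hB)).2, hi⟩)

end MonochromaticPackings

theorem sub_div_le_iff_le_add {n a k t : ℕ} (hk : 1 < k) :
    ((n : ℚ) - a) / ((k : ℚ) - 1) ≤ t ↔ n ≤ (k - 1) * t + a := by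
  have hk' : (0 : ℚ) < (k : ℚ) - 1 := by
    have : (1 : ℚ) < k := by exact_mod_cast hk
    linarith
  rw [div_le_iff₀ hk', ← Nat.cast_le (α := ℚ)]
  push_cast [Nat.cast_sub hk.le]
  constructor <;> intro h <;> linarith

theorem stmt3 (r s : ℕ) (hr : 2 ≤ r) (hs : 2 ≤ s)
    (hR : ∀ (n : ℕ) (H : Finset (Finset (Fin n))), (∀ A ∈ H, A.Nonempty) →
      ((n : ℚ) - (altNum n r H : ℚ)) / ((r : ℚ) - 1) ≤ (kneserChrom n r H : ℚ))
    (hS : ∀ (n : ℕ) (H : Finset (Finset (Fin n))), (∀ A ∈ H, A.Nonempty) →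
      ((n : ℚ) - (altNum n s H : ℚ)) / ((s : ℚ) - 1) ≤ (kneserChrom n s H : ℚ)) :
    ∀ (n : ℕ) (F : Finset (Finset (Fin n))), (∀ A ∈ F, A.Nonempty) →
      ((n : ℚ) - (altNum n (r * s) F : ℚ)) / ((r : ℚ) * (s : ℚ) - 1)
        ≤ (kneserChrom n (r * s) F : ℚ) := by
  intro n F hF
  have hrs : 1 < r * s := by nlinarith
  obtain ⟨c, hc⟩ := exists_isKneserColoring_kneserChrom hrs F
  set t := kneserChrom n (r * s) F
  set H := monoPackingHull F c s
  have hH : ∀ A ∈ H, A.Nonempty := fun A => nonempty_of_mem_monoPackingHull hF (by omega)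
  have hnH : n ≤ (r - 1) * t + altNum n r H := by
    obtain ⟨c', hc'⟩ := exists_isKneserColoring_monoPackingHull hc hF (by omega)
    exact (sub_div_le_iff_le_add (by omega)).mp
      ((hR n H hH).trans (by exact_mod_cast kneserChrom_le hc'))
  have hnF : ∀ V ∉ H, n ≤ (s - 1) * t + altNum n s {A ∈ F | A ⊆ V} := fun V hV =>
    (sub_div_le_iff_le_add (by omega)).mp ((hS n _ fun A hA => hF A (mem_filter.mp hA).1).trans
      (by exact_mod_cast kneserChrom_le (isKneserColoring_filter_subset hc.1 hV)))
  obtain ⟨σ, hσ⟩ := exists_altHyp_eq_altNum (r * s) F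
  have hHF := altHyp_le_altHyp_mul_add (r := r) σ hF hH hnF
  have hHσ := altNum_le_altHyp r σ H
  have ht : (r - 1) * t + r * ((s - 1) * t) = (r * s - 1) * t := by
    zify [(by omega : 1 ≤ r), (by omega : 1 ≤ s), hrs.le]
    ring
  have := (sub_div_le_iff_le_add (n := n) (a := altNum n (r * s) F) (t := t) hrs).mpr (by omega)
  simpa using this
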